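/- For n ≥ 3, the Waldschmidt constant of the Stanley-Reisner ideal I_{D_n} of the bipyramidal graph D_n equals (n+2)/n; that is, inf_{m ≥ 1} α(I_{D_n}^{(m)})/m = (n+2)/n. -/

import Mathlib

/-!
The product `F = x_0 x_1 ⋯ x_{n+1}` has degree `n + 2`, and each of the `3n + 1` primes is
generated by `n` variables dividing `F`, so `F ∈ I^{(n)}` and `α(I^{(n)}) ≤ n + 2`.
Conversely, every monomial `x^s` of an element of `P^m`, for `P` generated by variables, has
degree at least `m` in those variables. Adding these inequalities for the `n` primes
`⟨x_0, x_{n+1}, T_i⟩`, in which every cycle vertex occurs `n - 2` times, to twice the one for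
`⟨x_1, …, x_n⟩` gives `(n + 2) m ≤ n deg x^s`; hence `α(I^{(m)}) / m ≥ (n + 2) / n`.
-/

open MvPolynomial

section

open Finset

namespace MvPolynomial

variable {σ ι R : Type*} [CommSemiring R]

noncomputable def spanX (R : Type*) [CommSemiring R] (g : ι → σ) (t : Finset ι) :
    Ideal (MvPolynomial σ R) :=
  Ideal.span ((fun j => X (g j)) '' ↑t)

def degreeOnAtLeast (R : Type*) [CommSemiring R] (g : ι → σ) (t : Finset ι) (m : ℕ) :
    Ideal (MvPolynomial σ R) where
  carrier := {f | ∀ s ∈ f.support, m ≤ ∑ j ∈ t, s (g j)}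
  zero_mem' := by simp
  add_mem' ha hb s hs := by
    classical
    exact (Finset.mem_union.1 (support_add hs)).elim (ha s) (hb s)
  smul_mem' c f hf s hs := by
    classical
    obtain ⟨u, -, v, hv, rfl⟩ := Finset.mem_add.1 (support_mul c f hs)
    simp only [Finsupp.add_apply, sum_add_distrib]
    exact (hf v hv).trans le_add_self

theorem degreeOnAtLeast_mul_le (g : ι → σ) (t : Finset ι) (a b : ℕ) :
    degreeOnAtLeast R g t a * degreeOnAtLeast R g t b ≤ degreeOnAtLeast R g t (a + b) := by
  classical
  refine Ideal.mul_le.2 fun f hf f' hf' => fun s hs => ?_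
  obtain ⟨u, hu, v, hv, rfl⟩ := Finset.mem_add.1 (support_mul f f' hs)
  simp only [Finsupp.add_apply, sum_add_distrib]
  exact add_le_add (hf u hu) (hf' v hv)

theorem spanX_le_degreeOnAtLeast_one (g : ι → σ) (t : Finset ι) :
    spanX R g t ≤ degreeOnAtLeast R g t 1 := by
  rw [spanX, Ideal.span_le]
  rintro _ ⟨j, hj, rfl⟩
  intro s hs
  obtain rfl := Finset.mem_singleton.1 (support_monomial_subset hs)
  exact (single_le_sum (fun _ _ => Nat.zero_le _) hj).trans' (by simp)

theorem spanX_pow_le_degreeOnAtLeast (g : ι → σ) (t : Finset ι) (m : ℕ) :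
    spanX R g t ^ m ≤ degreeOnAtLeast R g t m := by
  induction m with
  | zero => exact fun _ _ _ _ => Nat.zero_le _
  | succ m ih =>
    rw [pow_succ]
    exact (Ideal.mul_mono ih (spanX_le_degreeOnAtLeast_one g t)).trans
      (degreeOnAtLeast_mul_le g t m 1)

theorem le_sum_of_mem_spanX_pow {g : ι → σ} {t : Finset ι} {m : ℕ} {f : MvPolynomial σ R}
    (hf : f ∈ spanX R g t ^ m) {s : σ →₀ ℕ} (hs : s ∈ f.support) :
    m ≤ ∑ j ∈ t, s (g j) :=
  spanX_pow_le_degreeOnAtLeast g t m hf s hs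

theorem prod_X_mem_spanX_pow (g : ι → σ) (t : Finset ι) :
    ∏ j ∈ t, (X (g j) : MvPolynomial σ R) ∈ spanX R g t ^ #t := by
  simpa using Ideal.prod_mem_prod (I := fun _ => spanX R g t)
    fun j hj => Ideal.subset_span ⟨j, hj, rfl⟩

theorem prod_X_mem_spanX_pow_of_subset (g : ι → σ) {t u : Finset ι} (htu : t ⊆ u) {m : ℕ}
    (hm : m ≤ #t) : ∏ j ∈ u, (X (g j) : MvPolynomial σ R) ∈ spanX R g t ^ m := by
  classical
  rw [← prod_sdiff htu]
  exact Ideal.mul_mem_left _ _ (Ideal.pow_le_pow_right hm (prod_X_mem_spanX_pow g t))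

noncomputable def initialDegree (I : Ideal (MvPolynomial σ R)) : ℕ :=
  sInf {d | ∃ f ∈ I, f ≠ 0 ∧ f.totalDegree = d}

theorem initialDegree_le {I : Ideal (MvPolynomial σ R)} {f : MvPolynomial σ R} (hf : f ∈ I)
    (hf0 : f ≠ 0) : initialDegree I ≤ f.totalDegree :=
  Nat.sInf_le ⟨f, hf, hf0, rfl⟩

theorem exists_totalDegree_eq_initialDegree {I : Ideal (MvPolynomial σ R)}
    (hI : ∃ f ∈ I, f ≠ 0) : ∃ f ∈ I, f ≠ 0 ∧ f.totalDegree = initialDegree I := by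
  obtain ⟨f, hf, hf0⟩ := hI
  exact Nat.sInf_mem (s := {d | ∃ f ∈ I, f ≠ 0 ∧ f.totalDegree = d})
    ⟨_, f, hf, hf0, rfl⟩

end MvPolynomial

-- `cyclicWindow n i l = {i, i + 1, …, i + l - 1}` read cyclically in `{1, …, n}`: `T_i` is the
-- window of length `n - 2` and `S_i` the one of length `n - 1`.
def cyclicWindow (n i l : ℕ) : Finset ℕ :=
  (range l).image fun k => (i + k - 1) % n + 1

theorem injOn_add_mod (n c : ℕ) : Set.InjOn (fun k => (k + c) % n) ↑(range n) := by
  intro x hx y hy hxy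
  have h : x ≡ y [MOD n] := Nat.ModEq.add_right_cancel' c hxy
  rwa [Nat.ModEq, Nat.mod_eq_of_lt (mem_range.1 hx), Nat.mod_eq_of_lt (mem_range.1 hy)] at h

theorem mod_add_one_mem_Icc {n : ℕ} (hn : 0 < n) (x : ℕ) : x % n + 1 ∈ Icc 1 n := by
  have := Nat.mod_lt x hn
  rw [mem_Icc]; omega

theorem cyclicWindow_subset_Icc {n : ℕ} (hn : 0 < n) (i l : ℕ) :
    cyclicWindow n i l ⊆ Icc 1 n := by
  intro j hj
  obtain ⟨k, -, rfl⟩ := mem_image.1 hj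
  exact mod_add_one_mem_Icc hn _

theorem card_cyclicWindow {n i l : ℕ} (hi : 1 ≤ i) (hl : l ≤ n) :
    #(cyclicWindow n i l) = l := by
  rw [cyclicWindow, card_image_of_injOn, card_range]
  intro x hx y hy hxy
  simp only [add_left_inj] at hxy
  rw [add_comm i x, add_comm i y, Nat.add_sub_assoc hi, Nat.add_sub_assoc hi] at hxy
  exact injOn_add_mod n (i - 1) (range_subset_range.2 hl hx) (range_subset_range.2 hl hy) hxy

theorem sum_Icc_rotate {M : Type*} [AddCommMonoid M] {n : ℕ} (hn : 0 < n) (k : ℕ)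
    (y : ℕ → M) :
    ∑ i ∈ Icc 1 n, y ((i + k - 1) % n + 1) = ∑ i ∈ Icc 1 n, y i := by
  have hinj : Set.InjOn (fun i => (i + k - 1) % n + 1) ↑(Icc 1 n) := by
    intro x hx y hy hxy
    simp only [coe_Icc, Set.mem_Icc, add_left_inj] at hx hy hxy
    rw [show x + k - 1 = x - 1 + k by omega, show y + k - 1 = y - 1 + k by omega] at hxy
    have := injOn_add_mod n k (mem_range.2 (by omega : x - 1 < n))
      (mem_range.2 (by omega : y - 1 < n)) hxy
    omega
  have himage : (Icc 1 n).image (fun i => (i + k - 1) % n + 1) = Icc 1 n :=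
    eq_of_subset_of_card_le (fun j hj => by
      obtain ⟨i, -, rfl⟩ := mem_image.1 hj
      exact mod_add_one_mem_Icc hn _) (card_image_of_injOn hinj).ge
  rw [← sum_image hinj, himage]

theorem sum_range_add_two {M : Type*} [AddCommMonoid M] (n : ℕ) (y : ℕ → M) :
    ∑ j ∈ range (n + 2), y j = y 0 + y (n + 1) + ∑ j ∈ Icc 1 n, y j := by
  rw [show range (n + 2) = insert 0 (insert (n + 1) (Icc 1 n)) by ext; simp; omega,
    sum_insert (by simp), sum_insert (by simp), add_assoc]

theorem add_two_mul_le_of_cyclicWindow_sums {n m : ℕ} (hn : 2 ≤ n) (y : ℕ → ℕ)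
    (hT : ∀ i ∈ Icc 1 n, m ≤ y 0 + y (n + 1) + ∑ j ∈ cyclicWindow n i (n - 2), y j)
    (hC : m ≤ ∑ j ∈ Icc 1 n, y j) :
    (n + 2) * m ≤ n * ∑ j ∈ range (n + 2), y j := by
  rw [sum_range_add_two]
  set W := ∑ j ∈ Icc 1 n, y j
  have hwindows : ∑ i ∈ Icc 1 n, ∑ j ∈ cyclicWindow n i (n - 2), y j ≤ (n - 2) * W :=
    calc ∑ i ∈ Icc 1 n, ∑ j ∈ cyclicWindow n i (n - 2), y j
        ≤ ∑ i ∈ Icc 1 n, ∑ k ∈ range (n - 2), y ((i + k - 1) % n + 1) :=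
          sum_le_sum fun _ _ => sum_image_le_of_nonneg fun _ _ => Nat.zero_le _
      _ = ∑ k ∈ range (n - 2), ∑ i ∈ Icc 1 n, y ((i + k - 1) % n + 1) := sum_comm
      _ = (n - 2) * W := by simp [sum_Icc_rotate (by omega : 0 < n), W]
  have hT_sum : n * m ≤ n * (y 0 + y (n + 1)) + (n - 2) * W :=
    calc n * m = ∑ _i ∈ Icc 1 n, m := by simp
      _ ≤ ∑ i ∈ Icc 1 n, (y 0 + y (n + 1) + ∑ j ∈ cyclicWindow n i (n - 2), y j) :=
          sum_le_sum hT
      _ ≤ n * (y 0 + y (n + 1)) + (n - 2) * W := by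
          rw [sum_add_distrib]
          simpa using hwindows
  have hW : (n - 2) * W + 2 * W = n * W := by rw [← add_mul, Nat.sub_add_cancel (by omega)]
  nlinarith

theorem csInf_div_eq_of_mul_le {α : ℕ → ℕ} {a b : ℕ} (hb : 1 ≤ b)
    (hlow : ∀ m, 1 ≤ m → a * m ≤ b * α m) (hup : α b ≤ a) :
    sInf {x : ℝ | ∃ m : ℕ, 1 ≤ m ∧ x = (α m : ℝ) / m} = (a : ℝ) / b := by
  have hb' : (0 : ℝ) < b := by exact_mod_cast hb
  refine IsLeast.csInf_eq ⟨⟨b, hb, ?_⟩, ?_⟩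
  · have := hlow b hb
    rw [show α b = a by nlinarith]
  · rintro x ⟨m, hm, rfl⟩
    have hm' : (0 : ℝ) < m := by exact_mod_cast hm
    rw [div_le_div_iff₀ hb' hm']
    exact_mod_cast (by linarith [hlow m hm] : a * m ≤ α m * b)

noncomputable def bipyramidSymbolicPower (R : Type*) [CommSemiring R] (n : ℕ)
    (e : ℕ → Fin (n + 2)) (m : ℕ) : Ideal (MvPolynomial (Fin (n + 2)) R) :=
  (⨅ i ∈ Finset.Icc 1 n,
    (Ideal.span ({X (e 0), X (e (n + 1))} ∪
      {p | ∃ k < n - 2, p = (X (e ((i + k - 1) % n + 1)) : MvPolynomial (Fin (n + 2)) R)}))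
      ^ m) ⊓
  (⨅ i ∈ Finset.Icc 1 n,
    (Ideal.span ({X (e 0)} ∪
      {p | ∃ k < n - 1, p = (X (e ((i + k - 1) % n + 1)) : MvPolynomial (Fin (n + 2)) R)}))
      ^ m) ⊓
  (⨅ i ∈ Finset.Icc 1 n,
    (Ideal.span ({X (e (n + 1))} ∪
      {p | ∃ k < n - 1, p = (X (e ((i + k - 1) % n + 1)) : MvPolynomial (Fin (n + 2)) R)}))
      ^ m) ⊓
  (Ideal.span {p | ∃ j ∈ Finset.Icc 1 n, p = (X (e j) : MvPolynomial (Fin (n + 2)) R)})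
    ^ m

section
variable {σ R : Type*} [CommSemiring R] (g : ℕ → σ) (n i l : ℕ)

theorem span_union_window_eq_spanX (a : ℕ) :
    Ideal.span ({X (g a)} ∪
        {p | ∃ k < l, p = (X (g ((i + k - 1) % n + 1)) : MvPolynomial σ R)}) =
      spanX R g (insert a (cyclicWindow n i l)) := by
  rw [spanX]; congr 1; ext; simp [cyclicWindow, eq_comm]

theorem span_pair_union_window_eq_spanX (a b : ℕ) :
    Ideal.span ({X (g a), X (g b)} ∪
        {p | ∃ k < l, p = (X (g ((i + k - 1) % n + 1)) : MvPolynomial σ R)}) =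
      spanX R g (insert a (insert b (cyclicWindow n i l))) := by
  rw [spanX]; congr 1; ext; simp [cyclicWindow, eq_comm, or_assoc]

theorem span_setOf_Icc_eq_spanX :
    Ideal.span {p | ∃ j ∈ Icc 1 n, p = (X (g j) : MvPolynomial σ R)} =
      spanX R g (Icc 1 n) := by
  rw [spanX]; congr 1; ext; simp [eq_comm]

end

section
variable {R : Type*} [CommSemiring R] {n : ℕ} {e : ℕ → Fin (n + 2)}

theorem mem_bipyramidSymbolicPower_iff {m : ℕ} {f : MvPolynomial (Fin (n + 2)) R} :
    f ∈ bipyramidSymbolicPower R n e m ↔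
      (∀ i ∈ Icc 1 n,
        f ∈ spanX R e (insert 0 (insert (n + 1) (cyclicWindow n i (n - 2)))) ^ m ∧
        f ∈ spanX R e (insert 0 (cyclicWindow n i (n - 1))) ^ m ∧
        f ∈ spanX R e (insert (n + 1) (cyclicWindow n i (n - 1))) ^ m) ∧
      f ∈ spanX R e (Icc 1 n) ^ m := by
  simp only [bipyramidSymbolicPower, Submodule.mem_inf, Ideal.mem_iInf,
    span_union_window_eq_spanX, span_pair_union_window_eq_spanX, span_setOf_Icc_eq_spanX,
    imp_and, forall_and, and_assoc]

theorem prod_X_pow_mem_bipyramidSymbolicPower (hn : 2 ≤ n) {k : ℕ} (hk : k ≤ n) (m : ℕ) :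
    (∏ j ∈ range (n + 2), (X (e j) : MvPolynomial (Fin (n + 2)) R)) ^ m ∈
      bipyramidSymbolicPower R n e (k * m) := by
  have hmem : ∀ t ⊆ range (n + 2), n ≤ #t →
      (∏ j ∈ range (n + 2), (X (e j) : MvPolynomial (Fin (n + 2)) R)) ^ m ∈
        spanX R e t ^ (k * m) := fun t ht hcard => by
    rw [pow_mul]
    exact Ideal.pow_mem_pow (prod_X_mem_spanX_pow_of_subset e ht (hk.trans hcard)) m
  have hIcc : Icc 1 n ⊆ range (n + 2) := fun j hj => by simp at hj ⊢; omega
  have hwin : ∀ i l, cyclicWindow n i l ⊆ Icc 1 n := cyclicWindow_subset_Icc (by omega)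
  have h0 : ∀ i l, 0 ∉ cyclicWindow n i l := fun i l h => by simpa using hwin i l h
  have hlast : ∀ i l, n + 1 ∉ cyclicWindow n i l := fun i l h => by simpa using hwin i l h
  have hsub : ∀ a ≤ n + 1, ∀ i l, insert a (cyclicWindow n i l) ⊆ range (n + 2) :=
    fun a ha i l => insert_subset (mem_range.2 (by omega)) ((hwin i l).trans hIcc)
  refine mem_bipyramidSymbolicPower_iff.2 ⟨fun i hi => ?_, hmem _ hIcc (by simp)⟩
  have hcard : ∀ l ≤ n, #(cyclicWindow n i l) = l :=
    fun l hl => card_cyclicWindow (mem_Icc.1 hi).1 hl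
  refine ⟨hmem _ (insert_subset (by simp) (hsub _ le_rfl i _)) ?_,
    hmem _ (hsub _ (by omega) i _) ?_, hmem _ (hsub _ le_rfl i _) ?_⟩
  · rw [card_insert_of_notMem (by simp [h0]), card_insert_of_notMem (hlast _ _),
      hcard _ (by omega)]
    omega
  · rw [card_insert_of_notMem (h0 _ _), hcard _ (by omega)]
    omega
  · rw [card_insert_of_notMem (hlast _ _), hcard _ (by omega)]
    omega

theorem le_totalDegree_of_mem_bipyramidSymbolicPower (hn : 2 ≤ n)
    (he : ∀ k, (e k : ℕ) = k % (n + 2)) {m : ℕ} {f : MvPolynomial (Fin (n + 2)) R}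
    (hf : f ∈ bipyramidSymbolicPower R n e m) (hf0 : f ≠ 0) :
    (n + 2) * m ≤ n * f.totalDegree := by
  obtain ⟨s, hs⟩ := support_nonempty.2 hf0
  obtain ⟨hprimes, hcycle⟩ := mem_bipyramidSymbolicPower_iff.1 hf
  have hwin : ∀ i l, cyclicWindow n i l ⊆ Icc 1 n := cyclicWindow_subset_Icc (by omega)
  have hdeg : ∑ j ∈ range (n + 2), s (e j) ≤ f.totalDegree := by
    have he' : ∀ v : Fin (n + 2), e v = v :=
      fun v => Fin.ext (by rw [he, Nat.mod_eq_of_lt v.2])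
    calc ∑ j ∈ range (n + 2), s (e j) = ∑ v, s v := by
          rw [← Fin.sum_univ_eq_sum_range (fun j => s (e j))]; simp only [he']
      _ = s.sum fun _ d => d := (Finsupp.sum_fintype s (fun _ d => d) fun _ => rfl).symm
      _ ≤ f.totalDegree := le_totalDegree hs
  refine (add_two_mul_le_of_cyclicWindow_sums hn (fun j => s (e j)) (fun i hi => ?_)
    (le_sum_of_mem_spanX_pow hcycle hs)).trans (Nat.mul_le_mul_left n hdeg)
  have := le_sum_of_mem_spanX_pow (hprimes i hi).1 hs
  have h0 : 0 ∉ insert (n + 1) (cyclicWindow n i (n - 2)) := by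
    rw [mem_insert, not_or]
    exact ⟨by omega, fun h => by simpa using hwin i _ h⟩
  have hlast : n + 1 ∉ cyclicWindow n i (n - 2) := fun h => by simpa using hwin i _ h
  rwa [sum_insert h0, sum_insert hlast, ← add_assoc] at this

end

end

/-- For `n ≥ 3`, the Waldschmidt constant of the Stanley-Reisner ideal `I_{D_n}` of the
bipyramidal graph `D_n` equals `(n+2)/n`: the infimum over `m ≥ 1` of
`α(I_{D_n}^{(m)})/m` is `(n+2)/n`, where the `m`-th symbolic power is the intersection
of the `m`-th powers of the primes `⟨x_0, x_{n+1}, T_i⟩`, `⟨x_0, S_i⟩`,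
`⟨x_{n+1}, S_i⟩` (for `i = 1,…,n`) and `⟨x_1,…,x_n⟩`, with `S_i = {x_i,…,x_{i+n-2}}`,
`T_i = {x_i,…,x_{i+n-3}}` (cyclic indices modulo `n`), and `α` is the least degree of a
nonzero element. -/
theorem stmt15 (K : Type*) [Field K] (n : ℕ) (hn : 3 ≤ n)
    (e : ℕ → Fin (n + 2)) (he : ∀ k, (e k : ℕ) = k % (n + 2))
    (sym : ℕ → Ideal (MvPolynomial (Fin (n + 2)) K))
    (hsym : ∀ m, sym m =
      (⨅ i ∈ Finset.Icc 1 n,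
        (Ideal.span ({X (e 0), X (e (n + 1))} ∪
          {p | ∃ k < n - 2, p = (X (e ((i + k - 1) % n + 1)) : MvPolynomial (Fin (n + 2)) K)}))
          ^ m) ⊓
      (⨅ i ∈ Finset.Icc 1 n,
        (Ideal.span ({X (e 0)} ∪
          {p | ∃ k < n - 1, p = (X (e ((i + k - 1) % n + 1)) : MvPolynomial (Fin (n + 2)) K)}))
          ^ m) ⊓
      (⨅ i ∈ Finset.Icc 1 n,
        (Ideal.span ({X (e (n + 1))} ∪
          {p | ∃ k < n - 1, p = (X (e ((i + k - 1) % n + 1)) : MvPolynomial (Fin (n + 2)) K)}))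
          ^ m) ⊓
      (Ideal.span {p | ∃ j ∈ Finset.Icc 1 n, p = (X (e j) : MvPolynomial (Fin (n + 2)) K)})
        ^ m) :
    sInf {x : ℝ | ∃ m : ℕ, 1 ≤ m ∧
        x = ((sInf {d : ℕ | ∃ f ∈ sym m, f ≠ 0 ∧ f.totalDegree = d} : ℕ) : ℝ) / m}
      = ((n : ℝ) + 2) / (n : ℝ) := by
  obtain rfl : sym = bipyramidSymbolicPower K n e := funext hsym
  set F : MvPolynomial (Fin (n + 2)) K := ∏ j ∈ Finset.range (n + 2), X (e j)
  have hF0 : F ≠ 0 := Finset.prod_ne_zero_iff.2 fun _ _ => X_ne_zero _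
  rw [show (n : ℝ) + 2 = ((n + 2 : ℕ) : ℝ) by push_cast; rfl]
  have hF : ∀ k ≤ n, ∀ m, F ^ m ∈ bipyramidSymbolicPower K n e (k * m) :=
    fun k hk m => prod_X_pow_mem_bipyramidSymbolicPower (by omega) hk m
  refine csInf_div_eq_of_mul_le (α := fun m => initialDegree (bipyramidSymbolicPower K n e m))
    (by omega) (fun m _ => ?_) ?_
  · obtain ⟨f, hf, hf0, hd⟩ := exists_totalDegree_eq_initialDegree
      ⟨F ^ m, by simpa using hF 1 (by omega) m, pow_ne_zero m hF0⟩
    exact hd ▸ le_totalDegree_of_mem_bipyramidSymbolicPower (by omega) he hf hf0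
  · calc _ ≤ F.totalDegree := initialDegree_le (by simpa using hF n le_rfl 1) hF0
      _ ≤ ∑ j ∈ Finset.range (n + 2), (X (e j) : MvPolynomial (Fin (n + 2)) K).totalDegree :=
          totalDegree_finsetProd _ _
      _ = n + 2 := by simp
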